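/- For a graph G of k-parallel paths with no isolated vertices, the total forcing number satisfies F_t(G) <= 2k, and this bound is sharp: if G is a disjoint union of k paths each of order at least 2, then F_t(G) = 2k. -/

import Mathlib

open SimpleGraph

/-- The set of vertices colored after `n` steps of the zero forcing process
starting from the initially colored set `F`. -/
def coloredAt {V : Type*} (G : SimpleGraph V) (F : Set V) : ℕ → Set V
  | 0 => F
  | n + 1 => coloredAt G F n ∪
      {w | ∃ u ∈ coloredAt G F n, G.Adj u w ∧
        ∀ x, G.Adj u x → x ≠ w → x ∈ coloredAt G F n}

/-- `F` is a zero forcing set of `G`. -/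
def IsForcingSet {V : Type*} (G : SimpleGraph V) (F : Set V) : Prop :=
  ∀ v, ∃ n, v ∈ coloredAt G F n

/-- The zero forcing number of `G`. -/
noncomputable def forcingNumber {V : Type*} (G : SimpleGraph V) [Fintype V] : ℕ :=
  sInf {k | ∃ F : Finset V, F.card = k ∧ IsForcingSet G ↑F}

/-- The step at which `v` gets colored. -/
noncomputable def kF {V : Type*} (G : SimpleGraph V) (F : Set V) (v : V) : ℕ :=
  sInf {n | v ∈ coloredAt G F n}

/-- `u` forces `w` in the forcing process started at `F`. -/
def Forces {V : Type*} (G : SimpleGraph V) (F : Set V) (u w : V) : Prop :=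
  G.Adj u w ∧ kF G F u < kF G F w ∧
    ∀ x, G.Adj u x → x ≠ w → kF G F x < kF G F w

/-- A chain set corresponding to the forcing set `F`: a partition of the vertex
set into `k` sequences, each starting at a vertex of `F`, in which every vertex
forces its successor. -/
def IsChainSet {V : Type*} {k : ℕ} (G : SimpleGraph V) (F : Set V)
    (R : Fin k → List V) : Prop :=
  (∀ i, R i ≠ []) ∧
  (∀ i (h : R i ≠ []), (R i).head h ∈ F) ∧
  (∀ i, (R i).Chain' (Forces G F)) ∧
  (∀ i, (R i).Nodup) ∧
  (∀ i j, i ≠ j → ∀ v, v ∈ R i → v ∉ R j) ∧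
  (∀ v, ∃ i, v ∈ R i)

/-- `u` precedes `v` in the chain (list) `L`. -/
def Precedes {V : Type*} (L : List V) (u v : V) : Prop :=
  ∃ p q : Fin L.length, (p : ℕ) < (q : ℕ) ∧ L.get p = u ∧ L.get q = v

/-- A standard drawing of `G` as a graph of `k` parallel paths: `k` vertex-disjoint
induced paths covering all vertices, drawn in the plane as parallel horizontal lines
(vertices placed injectively, each path on its own horizontal line with increasing
x-coordinates), such that the edges between different paths, drawn as straight-line
segments, do not cross each other. -/
structure ParallelPathsDrawing {V : Type*} (G : SimpleGraph V) (k : ℕ) where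
  paths : Fin k → List V
  pos : V → ℝ × ℝ
  nonempty : ∀ i, paths i ≠ []
  nodup : ∀ i, (paths i).Nodup
  disjoint : ∀ i j, i ≠ j → ∀ v, v ∈ paths i → v ∉ paths j
  cover : ∀ v, ∃ i, v ∈ paths i
  isPath : ∀ i, (paths i).Chain' G.Adj
  induced : ∀ i, ∀ a b : Fin (paths i).length,
      (a : ℕ) + 1 < (b : ℕ) → ¬ G.Adj ((paths i).get a) ((paths i).get b)
  inj : Function.Injective pos
  sameY : ∀ i, ∀ u ∈ paths i, ∀ v ∈ paths i, (pos u).2 = (pos v).2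
  diffY : ∀ i j, i ≠ j → ∀ u ∈ paths i, ∀ v ∈ paths j, (pos u).2 ≠ (pos v).2
  increasingX : ∀ i, ((paths i).map (fun v => (pos v).1)).Chain' (· < ·)
  noncross : ∀ u v u' v' : V, G.Adj u v → G.Adj u' v' →
      (∀ i, ¬ (u ∈ paths i ∧ v ∈ paths i)) →
      (∀ i, ¬ (u' ∈ paths i ∧ v' ∈ paths i)) →
      ({u, v} : Set V) ≠ {u', v'} →
      openSegment ℝ (pos u) (pos v) ∩ openSegment ℝ (pos u') (pos v') = ∅

/-- `G` admits a standard drawing with `k` parallel paths. -/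
def HasParallelDrawing {V : Type*} (G : SimpleGraph V) (k : ℕ) : Prop :=
  Nonempty (ParallelPathsDrawing G k)

/-- `G` is a graph of `k`-parallel paths: it admits a standard drawing with `k`
parallel paths and with no fewer. -/
def IsGraphOfParallelPaths {V : Type*} (G : SimpleGraph V) (k : ℕ) : Prop :=
  HasParallelDrawing G k ∧ ∀ j, 0 < j → j < k → ¬ HasParallelDrawing G j

/-- `v` has two non-consecutive neighbors in the list `L`. -/
def TwoNonconsecNbrs {V : Type*} (G : SimpleGraph V) (L : List V) (v : V) : Prop :=
  ∃ p q : Fin L.length, (p : ℕ) + 1 < (q : ℕ) ∧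
    G.Adj v (L.get p) ∧ G.Adj v (L.get q)

/-- `F` is a total forcing set: a zero forcing set inducing a subgraph with no
isolated vertex. -/
def IsTotalForcingSet {V : Type*} (G : SimpleGraph V) (F : Set V) : Prop :=
  IsForcingSet G F ∧ ∀ v ∈ F, ∃ u ∈ F, G.Adj u v

/-- The total forcing number of `G`. -/
noncomputable def totalForcingNumber {V : Type*} (G : SimpleGraph V) [Fintype V] : ℕ :=
  sInf {m | ∃ F : Finset V, F.card = m ∧ IsTotalForcingSet G ↑F}

/-- `A` is a real symmetric matrix whose off-diagonal nonzero pattern is the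
adjacency of `G`. -/
def MatrixOfGraph {V : Type*} (G : SimpleGraph V) (A : Matrix V V ℝ) : Prop :=
  A.IsSymm ∧ ∀ i j, i ≠ j → (A i j ≠ 0 ↔ G.Adj i j)

/-- The maximum nullity `M(G)` of `G`. -/
noncomputable def maxNullity {V : Type*} (G : SimpleGraph V) [Fintype V] : ℕ :=
  sSup {m | ∃ A : Matrix V V ℝ, MatrixOfGraph G A ∧ Fintype.card V - A.rank = m}

/-- The disjoint union of `k` paths, the `i`-th of order `n i`. -/
def disjointPaths (k : ℕ) (n : Fin k → ℕ) : SimpleGraph (Σ i, Fin (n i)) :=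
  SimpleGraph.fromRel (fun a b => a.1 = b.1 ∧ (a.2 : ℕ) + 1 = (b.2 : ℕ))

/-!
Colour the first vertex of every path together with one neighbour of it. If the forcing process
stalls, then on every path that is not entirely coloured the last vertex `u` of its coloured
prefix has a second uncoloured neighbour; it lies on another path, strictly to the right of that
path's own last coloured prefix vertex. Following these cross edges from path to path closes up a
cyclic family of segments of this shape, and such a family always contains two crossing segments
(short-cut the family at its highest level and induct), contradicting the drawing. For `k`
disjoint paths, a forcing set meets every component, and a total one contains a neighbour of that
vertex in the same component.
-/

open Set Function

-- The abscissa at height `l` of the line `PQ`; junk when `P.2 = Q.2`.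
noncomputable def abscissaAt (P Q : ℝ × ℝ) (l : ℝ) : ℝ :=
  P.1 + (l - P.2) * (Q.1 - P.1) / (Q.2 - P.2)

lemma abscissaAt_fst (x y : ℝ) (Q : ℝ × ℝ) : abscissaAt (x, y) Q y = x := by
  simp [abscissaAt]

lemma abscissaAt_snd {x₀ y₀ x y : ℝ} (h : y₀ ≠ y) : abscissaAt (x₀, y₀) (x, y) y = x := by
  have : y - y₀ ≠ 0 := sub_ne_zero.2 h.symm
  simp only [abscissaAt]
  field_simp
  ring

lemma abscissaAt_mul_add_mul {P Q : ℝ × ℝ} (h : P.2 ≠ Q.2) {a b : ℝ} (hab : a + b = 1) :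
    abscissaAt P Q (a * P.2 + b * Q.2) = a * P.1 + b * Q.1 := by
  have : Q.2 - P.2 ≠ 0 := sub_ne_zero.2 h.symm
  obtain rfl : a = 1 - b := by linarith
  simp only [abscissaAt]
  field_simp
  ring

lemma continuous_abscissaAt (P Q : ℝ × ℝ) : Continuous (abscissaAt P Q) := by
  unfold abscissaAt
  fun_prop

theorem mem_openSegment_iff_abscissaAt {P Q X : ℝ × ℝ} (h : P.2 ≠ Q.2) :
    X ∈ openSegment ℝ P Q ↔ X.2 ∈ uIoo P.2 Q.2 ∧ X.1 = abscissaAt P Q X.2 := by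
  rw [← Ioo_min_max, ← openSegment_eq_Ioo' h]
  constructor
  · rintro ⟨a, b, ha, hb, hab, rfl⟩
    exact ⟨⟨a, b, ha, hb, hab, by simp⟩, by simp [abscissaAt_mul_add_mul h hab]⟩
  · rintro ⟨⟨a, b, ha, hb, hab, hX⟩, hX'⟩
    refine ⟨a, b, ha, hb, hab, Prod.ext ?_ ?_⟩
    · simp only [smul_eq_mul] at hX
      simp [hX', ← hX, abscissaAt_mul_add_mul h hab]
    · simpa using hX

lemma abscissaAt_eq_of_ne {P Q : ℝ × ℝ} (h : P.2 ≠ Q.2) {l l' : ℝ} (hl : l ≠ l') :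
    abscissaAt (abscissaAt P Q l, l) (abscissaAt P Q l', l') = abscissaAt P Q := by
  have : Q.2 - P.2 ≠ 0 := sub_ne_zero.2 h.symm
  have : l' - l ≠ 0 := sub_ne_zero.2 hl.symm
  ext m
  simp only [abscissaAt]
  field_simp
  ring

theorem openSegment_abscissaAt_subset {P Q : ℝ × ℝ} (h : P.2 ≠ Q.2) {l l' : ℝ}
    (hl : l ∈ uIcc P.2 Q.2) (hl' : l' ∈ uIcc P.2 Q.2) (hne : l ≠ l') :
    openSegment ℝ (abscissaAt P Q l, l) (abscissaAt P Q l', l') ⊆ openSegment ℝ P Q := by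
  intro X hX
  rw [mem_openSegment_iff_abscissaAt hne, abscissaAt_eq_of_ne h hne] at hX
  exact (mem_openSegment_iff_abscissaAt h).2 ⟨uIoo_subset_Ioo hl hl' hX.1, hX.2⟩

theorem openSegment_inter_nonempty {A B C D : ℝ × ℝ} (hAB : A.2 ≠ B.2) (hCD : C.2 ≠ D.2)
    {l₁ l₂ : ℝ} (h₁ : l₁ ∈ uIcc A.2 B.2 ∩ uIcc C.2 D.2) (h₂ : l₂ ∈ uIcc A.2 B.2 ∩ uIcc C.2 D.2)
    (hlt₁ : abscissaAt A B l₁ < abscissaAt C D l₁) (hlt₂ : abscissaAt C D l₂ < abscissaAt A B l₂) :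
    (openSegment ℝ A B ∩ openSegment ℝ C D).Nonempty := by
  wlog hl : l₁ < l₂ generalizing A B C D l₁ l₂
  · have hne : l₁ ≠ l₂ := by rintro rfl; linarith
    rw [inter_comm]
    exact this hCD hAB (inter_comm .. ▸ h₂) (inter_comm .. ▸ h₁) hlt₂ hlt₁
      (lt_of_le_of_ne (not_lt.1 hl) hne.symm)
  obtain ⟨l, hl, hzero⟩ : ∃ l ∈ Ioo l₁ l₂, abscissaAt C D l - abscissaAt A B l = 0 :=
    intermediate_value_Ioo' hl.le
      ((continuous_abscissaAt C D).sub (continuous_abscissaAt A B)).continuousOn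
      ⟨by simp only [Pi.sub_apply]; linarith, by simp only [Pi.sub_apply]; linarith⟩
  refine ⟨(abscissaAt A B l, l), (mem_openSegment_iff_abscissaAt hAB).2 ⟨?_, rfl⟩,
    (mem_openSegment_iff_abscissaAt hCD).2 ⟨?_, by simpa [sub_eq_zero, eq_comm] using hzero⟩⟩
  · exact uIoo_subset_Ioo h₁.1 h₂.1 (Ioo_subset_uIoo hl)
  · exact uIoo_subset_Ioo h₁.2 h₂.2 (Ioo_subset_uIoo hl)

theorem Set.PairwiseDisjoint.of_subset_comp {ι β : Type*} {s t : Set ι} {A B : ι → Set β}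
    {g : ι → ι} (hB : s.PairwiseDisjoint B) (hg : MapsTo g t s) (hinj : InjOn g t)
    (hAB : ∀ i ∈ t, A i ⊆ B (g i)) : t.PairwiseDisjoint A :=
  (hinj.pairwiseDisjoint_image.1 (hB.subset hg.image_subset)).mono_on hAB

section ArcSystem

variable {ι : Type*}

def arc (Y : ι → ℝ) (f : ι → ι) (p q : ι → ℝ) (i : ι) : Set (ℝ × ℝ) :=
  openSegment ℝ (p i, Y i) (q i, Y (f i))

/-- Arc `i` leaves height `Y i` at abscissa `p i` and lands at height `Y (f i)` strictly to the
right of the point where arc `f i` leaves. -/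
structure IsArcSystem (s : Finset ι) (f : ι → ι) (p q : ι → ℝ) : Prop where
  mapsTo : MapsTo f s s
  ne : ∀ i ∈ s, f i ≠ i
  lt : ∀ i ∈ s, p (f i) < q i

variable [DecidableEq ι] {Y : ι → ℝ} {s : Finset ι} {f : ι → ι} {p q : ι → ℝ} {a c : ι}

lemma IsArcSystem.erase_update {p' q' : ι → ℝ} (h : IsArcSystem s f p q) (hinj : InjOn f s)
    (hc : c ∈ s) (hca : f c = a) (hac : f a ≠ c)
    (hlt : ∀ i ∈ s.erase a, p' (update f c (f a) i) < q' i) :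
    IsArcSystem (s.erase a) (update f c (f a)) p' q' := by
  have ha : a ∈ s := hca ▸ h.mapsTo hc
  refine ⟨fun i hi => ?_, fun i hi => ?_, hlt⟩
  all_goals
    obtain ⟨hia, hi⟩ := Finset.mem_erase.1 hi
    rcases eq_or_ne i c with rfl | hic
  · rw [update_self]
    exact Finset.mem_erase.2 ⟨h.ne a ha, h.mapsTo ha⟩
  · rw [update_of_ne hic]
    exact Finset.mem_erase.2 ⟨fun hfi => hic (hinj hi hc (hfi.trans hca.symm)), h.mapsTo hi⟩
  · simpa using hac
  · simpa [update_of_ne hic] using h.ne i hi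

lemma IsArcSystem.exists_erase_of_lt (hY : Injective Y) (h : IsArcSystem s f p q) (hinj : InjOn f s)
    (hc : c ∈ s) (hca : f c = a) (hmax : ∀ i ∈ s, Y i ≤ Y a) (hcb : Y c < Y (f a))
    (hdisj : (s : Set ι).PairwiseDisjoint (arc Y f p q)) :
    ∃ f' p' q', IsArcSystem (s.erase a) f' p' q' ∧
      (s.erase a : Set ι).PairwiseDisjoint (arc Y f' p' q') := by
  have ha : a ∈ s := hca ▸ h.mapsTo hc
  have hba : Y (f a) < Y a := (hmax _ (h.mapsTo ha)).lt_of_ne (hY.ne (h.ne a ha))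
  have hca' : c ≠ a := by rintro rfl; exact h.ne c hc hca
  set z := abscissaAt (p c, Y c) (q c, Y a) (Y (f a))
  -- otherwise arc `c` crosses arc `a` between the heights `Y (f a)` and `Y a`
  have hz : q a ≤ z := by
    by_contra! hz
    refine Set.not_disjoint_iff_nonempty_inter.2 ?_ (hdisj ha hc hca'.symm)
    simp only [arc, hca]
    refine openSegment_inter_nonempty (l₁ := Y a) (l₂ := Y (f a)) hba.ne' (hcb.trans hba).ne
      ⟨left_mem_uIcc, right_mem_uIcc⟩ ⟨right_mem_uIcc, mem_uIcc_of_le hcb.le hba.le⟩ ?_ ?_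
    · rw [abscissaAt_fst, abscissaAt_snd (hcb.trans hba).ne]
      simpa [hca] using h.lt c hc
    · rwa [abscissaAt_snd hba.ne']
  refine ⟨update f c (f a), p, update q c z, h.erase_update hinj hc hca (hY.ne_iff.1 hcb.ne') ?_,
    (hdisj.subset (Finset.coe_subset.2 (s.erase_subset a))).mono_on fun i hi => ?_⟩
  · intro i hi
    rcases eq_or_ne i c with rfl | hic
    · simpa using (h.lt a ha).trans_le hz
    · simpa [update_of_ne hic] using h.lt i (Finset.mem_of_mem_erase hi)
  · rcases eq_or_ne i c with rfl | hic
    · have := openSegment_abscissaAt_subset (P := (p i, Y i)) (Q := (q i, Y a))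
        (l := Y i) (l' := Y (f a)) (hcb.trans hba).ne left_mem_uIcc
        (mem_uIcc_of_le hcb.le hba.le) hcb.ne
      simpa [arc, abscissaAt_fst, hca] using this
    · simp [arc, update_of_ne hic]

lemma IsArcSystem.exists_erase_of_le (hY : Injective Y) (h : IsArcSystem s f p q) (hinj : InjOn f s)
    (hc : c ∈ s) (hca : f c = a) (hmax : ∀ i ∈ s, Y i ≤ Y a) (hbc : Y (f a) ≤ Y c)
    (hdisj : (s : Set ι).PairwiseDisjoint (arc Y f p q)) :
    ∃ f' p' q', IsArcSystem (s.erase a) f' p' q' ∧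
      (s.erase a : Set ι).PairwiseDisjoint (arc Y f' p' q') := by
  have ha : a ∈ s := hca ▸ h.mapsTo hc
  have hba : Y (f a) < Y a := (hmax _ (h.mapsTo ha)).lt_of_ne (hY.ne (h.ne a ha))
  have hca' : c ≠ a := by rintro rfl; exact h.ne c hc hca
  have hcY : Y c < Y a := (hmax c hc).lt_of_ne (hY.ne hca')
  set X := abscissaAt (p a, Y a) (q a, Y (f a)) (Y c)
  -- otherwise arc `a` crosses arc `c` between the heights `Y c` and `Y a`
  have hX : X ≤ p c := by
    by_contra! hX
    refine Set.not_disjoint_iff_nonempty_inter.2 ?_ (hdisj hc ha hca')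
    simp only [arc, hca]
    refine openSegment_inter_nonempty (l₁ := Y c) (l₂ := Y a) hcY.ne hba.ne'
      ⟨left_mem_uIcc, mem_uIcc_of_ge hbc hcY.le⟩ ⟨right_mem_uIcc, left_mem_uIcc⟩ ?_ ?_
    · rwa [abscissaAt_fst]
    · rw [abscissaAt_fst, abscissaAt_snd hcY.ne]
      simpa [hca] using h.lt c hc
  have hac : f a ≠ c := by
    rintro hac
    have : q a ≤ p (f a) := by simpa [X, ← hac, abscissaAt_snd hba.ne'] using hX
    exact (h.lt a ha).not_ge this
  have hbc' : Y (f a) < Y c := hbc.lt_of_ne (hY.ne hac)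
  have hp : ∀ j, update p c X j ≤ p j := fun j => by
    rcases eq_or_ne j c with rfl | hjc <;> simp [*]
  refine ⟨update f c (f a), update p c X, update q c (q a),
    h.erase_update hinj hc hca hac fun i hi => ?_,
    hdisj.of_subset_comp (g := update id c a) (fun i hi => ?_) (fun i hi j hj hij => ?_)
      fun i hi => ?_⟩
  · rcases eq_or_ne i c with rfl | hic
    · simpa [update_of_ne hac] using h.lt a ha
    · simpa [update_of_ne hic] using (hp _).trans_lt (h.lt i (Finset.mem_of_mem_erase hi))
  · rcases eq_or_ne i c with rfl | hic
    · simpa using ha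
    · simpa [update_of_ne hic] using Finset.mem_of_mem_erase hi
  · have hia := Finset.ne_of_mem_erase hi
    have hja := Finset.ne_of_mem_erase hj
    simp only [update_apply, id] at hij
    split_ifs at hij <;> simp_all
  · rcases eq_or_ne i c with rfl | hic
    · have := openSegment_abscissaAt_subset (P := (p a, Y a)) (Q := (q a, Y (f a)))
        (l := Y i) (l' := Y (f a)) hba.ne' (mem_uIcc_of_ge hbc hcY.le) right_mem_uIcc hbc'.ne'
      simpa [arc, abscissaAt_snd hba.ne'] using this
    · simp [arc, update_of_ne hic]

theorem IsArcSystem.not_pairwiseDisjoint (hY : Injective Y) (h : IsArcSystem s f p q)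
    (hs : s.Nonempty) : ¬ (s : Set ι).PairwiseDisjoint (arc Y f p q) := by
  induction s using Finset.strongInduction generalizing f p q with
  | H s ih =>
  intro hdisj
  by_cases hsurj : SurjOn f s s
  · have hinj : InjOn f s := Finset.injOn_of_surjOn_of_card_le f h.mapsTo hsurj le_rfl
    obtain ⟨a, ha, hmax⟩ := s.exists_max_image Y hs
    obtain ⟨c, hc, hca⟩ := hsurj ha
    obtain ⟨f', p', q', h', hdisj'⟩ := (lt_or_ge (Y c) (Y (f a))).elim
      (h.exists_erase_of_lt hY hinj hc hca hmax · hdisj)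
      (h.exists_erase_of_le hY hinj hc hca hmax · hdisj)
    exact ih _ (Finset.erase_ssubset ha) h' ⟨f a, Finset.mem_erase.2 ⟨h.ne a ha, h.mapsTo ha⟩⟩
      hdisj'
  · obtain ⟨a, ha, hnot⟩ : ∃ a ∈ s, ∀ c ∈ s, f c ≠ a := by
      simpa [SurjOn, subset_def] using hsurj
    refine ih _ (Finset.erase_ssubset ha) ⟨fun i hi => ?_, fun i hi => ?_, fun i hi => ?_⟩
      ⟨f a, Finset.mem_erase.2 ⟨h.ne a ha, h.mapsTo ha⟩⟩
      (hdisj.subset (Finset.coe_subset.2 (s.erase_subset a)))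
    all_goals obtain ⟨-, hi⟩ := Finset.mem_erase.1 hi
    exacts [Finset.mem_erase.2 ⟨hnot i hi, h.mapsTo hi⟩, h.ne i hi, h.lt i hi]

end ArcSystem

section Forcing

variable {V : Type*} {G : SimpleGraph V} {F F' : Set V}

def IsForcingClosed (G : SimpleGraph V) (C : Set V) : Prop :=
  ∀ u ∈ C, ∀ w, G.Adj u w → (∀ x, G.Adj u x → x ≠ w → x ∈ C) → w ∈ C

lemma coloredAt_mono (G : SimpleGraph V) (F : Set V) : Monotone (coloredAt G F) :=
  monotone_nat_of_le_succ fun _ => subset_union_left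

lemma coloredAt_subset_coloredAt (h : F ⊆ F') : ∀ n, coloredAt G F n ⊆ coloredAt G F' n
  | 0 => h
  | n + 1 => union_subset_union (coloredAt_subset_coloredAt h n) fun _ ⟨u, hu, huw, hx⟩ =>
      ⟨u, coloredAt_subset_coloredAt h n hu, huw,
        fun x hux hxw => coloredAt_subset_coloredAt h n (hx x hux hxw)⟩

lemma IsForcingSet.mono (hF : IsForcingSet G F) (h : F ⊆ F') : IsForcingSet G F' := fun v =>
  let ⟨n, hn⟩ := hF v
  ⟨n, coloredAt_subset_coloredAt h n hn⟩

lemma coloredAt_subset_preimage_image {β : Type*} {φ : V → β}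
    (hφ : ∀ u v, G.Adj u v → φ u = φ v) : ∀ n, coloredAt G F n ⊆ φ ⁻¹' (φ '' F)
  | 0 => subset_preimage_image φ F
  | n + 1 => union_subset (coloredAt_subset_preimage_image hφ n) fun w ⟨u, hu, huw, _⟩ => by
      rw [mem_preimage, ← hφ u w huw]
      exact coloredAt_subset_preimage_image hφ n hu

lemma IsForcingSet.image_eq_range {β : Type*} {φ : V → β} (hF : IsForcingSet G F)
    (hφ : ∀ u v, G.Adj u v → φ u = φ v) : φ '' F = range φ := by
  refine (image_subset_range φ F).antisymm ?_
  rintro _ ⟨v, rfl⟩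
  obtain ⟨n, hn⟩ := hF v
  exact coloredAt_subset_preimage_image hφ n hn

lemma exists_isForcingClosed_coloredAt [Finite V] (G : SimpleGraph V) (F : Set V) :
    ∃ n, IsForcingClosed G (coloredAt G F n) := by
  obtain ⟨n, hn⟩ := WellFoundedGT.monotone_chain_condition ⟨coloredAt G F, coloredAt_mono G F⟩
  refine ⟨n, fun u hu w huw hx => ?_⟩
  have hstable : coloredAt G F n = coloredAt G F (n + 1) := hn (n + 1) n.le_succ
  exact hstable ▸ Or.inr ⟨u, hu, huw, hx⟩

theorem isForcingSet_of_forall_isForcingClosed [Finite V]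
    (h : ∀ C, F ⊆ C → IsForcingClosed G C → C = univ) : IsForcingSet G F := by
  obtain ⟨n, hn⟩ := exists_isForcingClosed_coloredAt G F
  have hall := h _ (coloredAt_mono G F n.zero_le) hn
  exact fun v => ⟨n, hall ▸ mem_univ v⟩

lemma isTotalForcingSet_univ (hG : ∀ v, ∃ u, G.Adj u v) : IsTotalForcingSet G univ :=
  ⟨fun _ => ⟨0, trivial⟩, fun v _ => let ⟨u, hu⟩ := hG v; ⟨u, trivial, hu⟩⟩

variable [Fintype V]

lemma totalForcingNumber_le {F : Finset V} (hF : IsTotalForcingSet G F) :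
    totalForcingNumber G ≤ F.card :=
  Nat.sInf_le ⟨F, rfl, hF⟩

lemma le_totalForcingNumber (hG : ∀ v, ∃ u, G.Adj u v) {m : ℕ}
    (h : ∀ F : Finset V, IsTotalForcingSet G F → m ≤ F.card) : m ≤ totalForcingNumber G := by
  have hne : {m | ∃ F : Finset V, F.card = m ∧ IsTotalForcingSet G F}.Nonempty :=
    ⟨_, Finset.univ, rfl, by simpa using isTotalForcingSet_univ hG⟩
  obtain ⟨F, hF, htot⟩ := Nat.sInf_mem hne
  rw [totalForcingNumber, ← hF]
  exact h F htot

/-- Adding a neighbour of each vertex of a forcing set makes it total. -/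
theorem totalForcingNumber_le_two_mul_card (hG : ∀ v, ∃ u, G.Adj u v) {F : Finset V}
    (hF : IsForcingSet G F) : totalForcingNumber G ≤ 2 * F.card := by
  classical
  choose nbr hnbr using hG
  refine (totalForcingNumber_le (F := F ∪ F.image nbr)
    ⟨hF.mono (by simp), fun v hv => ?_⟩).trans ?_
  · simp only [Finset.coe_union, Finset.coe_image, mem_union, Finset.mem_coe, mem_image] at hv ⊢
    rcases hv with hv | ⟨u, hu, rfl⟩
    · exact ⟨nbr v, Or.inr ⟨v, hv, rfl⟩, hnbr v⟩
    · exact ⟨u, Or.inl hu, (hnbr u).symm⟩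
  · calc (F ∪ F.image nbr).card ≤ F.card + (F.image nbr).card := Finset.card_union_le _ _
      _ ≤ 2 * F.card := by linarith [F.card_image_le (f := nbr)]

end Forcing

lemma List.exists_getElem_not_of_exists_not {α : Type*} {P : α → Prop} {l : List α}
    (h : ∃ x ∈ l, ¬ P x) : ∃ n, ∃ hn : n < l.length, ¬ P l[n] ∧ ∀ m (hm : m < n), P l[m] := by
  classical
  have hex : ∃ n, ∃ hn : n < l.length, ¬ P l[n] := by
    obtain ⟨x, hx, hPx⟩ := h
    obtain ⟨n, hn, rfl⟩ := List.getElem_of_mem hx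
    exact ⟨n, hn, hPx⟩
  obtain ⟨hn, hP⟩ := Nat.find_spec hex
  refine ⟨Nat.find hex, hn, hP, fun m hm => ?_⟩
  by_contra hPm
  exact Nat.find_min hex hm ⟨by omega, hPm⟩

namespace ParallelPathsDrawing

variable {V : Type*} {G : SimpleGraph V} {k : ℕ} (D : ParallelPathsDrawing G k)

lemma eq_of_mem_of_mem {v : V} {i j : Fin k} (hi : v ∈ D.paths i) (hj : v ∈ D.paths j) :
    i = j := by
  by_contra h
  exact D.disjoint i j h v hi hj

noncomputable def level (i : Fin k) : ℝ :=
  (D.pos ((D.paths i).head (D.nonempty i))).2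

lemma pos_snd {v : V} {i : Fin k} (h : v ∈ D.paths i) : (D.pos v).2 = D.level i :=
  D.sameY i v h _ (List.head_mem _)

lemma level_injective : Injective D.level := fun i j h => by
  by_contra hij
  exact D.diffY i j hij _ (List.head_mem _) _ (List.head_mem _) h

lemma pos_fst_lt {i : Fin k} {p q : ℕ} (hq : q < (D.paths i).length) (hpq : p < q) :
    (D.pos (D.paths i)[p]).1 < (D.pos (D.paths i)[q]).1 := by
  have h := List.pairwise_iff_getElem.1
    (List.pairwise_map.1 (List.isChain_iff_pairwise.1 (D.increasingX i)))
  exact h p q (by omega) hq hpq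

lemma adj_getElem_add_one {i : Fin k} {p : ℕ} (hp : p + 1 < (D.paths i).length) :
    G.Adj (D.paths i)[p] (D.paths i)[p + 1] :=
  List.isChain_iff_getElem.1 (D.isPath i) p hp

lemma eq_add_one_or_of_adj {i : Fin k} {p q : ℕ} (hp : p < (D.paths i).length)
    (hq : q < (D.paths i).length) (h : G.Adj (D.paths i)[p] (D.paths i)[q]) :
    q = p + 1 ∨ p = q + 1 := by
  have hpq := D.induced i ⟨p, hp⟩ ⟨q, hq⟩
  have hqp := D.induced i ⟨q, hq⟩ ⟨p, hp⟩
  simp only [List.get_eq_getElem] at hpq hqp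
  have hne : p ≠ q := by rintro rfl; exact h.ne rfl
  by_contra! hc
  rcases hne.lt_or_gt with hlt | hlt
  · exact hpq (by omega) h
  · exact hqp (by omega) h.symm

lemma disjoint_openSegment {u v u' v' : V} {i j i' j' : Fin k} (huv : G.Adj u v)
    (hu'v' : G.Adj u' v') (hu : u ∈ D.paths i) (hv : v ∈ D.paths j) (hij : i ≠ j)
    (hu' : u' ∈ D.paths i') (hv' : v' ∈ D.paths j') (hij' : i' ≠ j')
    (hne : ({u, v} : Set V) ≠ {u', v'}) :
    Disjoint (openSegment ℝ (D.pos u) (D.pos v)) (openSegment ℝ (D.pos u') (D.pos v')) :=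
  disjoint_iff_inter_eq_empty.2 <| D.noncross u v u' v' huv hu'v'
    (fun _ ⟨h₁, h₂⟩ => hij ((D.eq_of_mem_of_mem hu h₁).trans (D.eq_of_mem_of_mem hv h₂).symm))
    (fun _ ⟨h₁, h₂⟩ => hij' ((D.eq_of_mem_of_mem hu' h₁).trans (D.eq_of_mem_of_mem hv' h₂).symm))
    hne

-- `u` is the last vertex of the longest prefix of path `i` inside `C`.
lemma exists_frontier {C : Set V} (hC : IsForcingClosed G C) {i : Fin k}
    (hhead : (D.paths i).head (D.nonempty i) ∈ C) (hi : ∃ v ∈ D.paths i, v ∉ C) :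
    ∃ u z j, u ∈ C ∧ u ∈ D.paths i ∧ G.Adj u z ∧ z ∉ C ∧ z ∈ D.paths j ∧ j ≠ i ∧
      ∀ v ∈ D.paths i, v ∉ C → (D.pos u).1 < (D.pos v).1 := by
  obtain ⟨n, hn, hnC, hprefix⟩ := List.exists_getElem_not_of_exists_not hi
  obtain ⟨n, rfl⟩ : ∃ m, n = m + 1 := Nat.exists_eq_succ_of_ne_zero <| by
    rintro rfl
    exact hnC (by simpa [List.head_eq_getElem] using hhead)
  have huC : (D.paths i)[n] ∈ C := hprefix n n.lt_succ_self
  obtain ⟨z, hz, hzw, hzC⟩ : ∃ z, G.Adj (D.paths i)[n] z ∧ z ≠ (D.paths i)[n + 1] ∧ z ∉ C := by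
    by_contra! h
    exact hnC (hC _ huC _ (D.adj_getElem_add_one hn) h)
  obtain ⟨j, hj⟩ := D.cover z
  refine ⟨_, z, j, huC, List.getElem_mem _, hz, hzC, hj, ?_, fun v hv hvC => ?_⟩
  · rintro rfl
    obtain ⟨m, hm, rfl⟩ := List.getElem_of_mem hj
    rcases D.eq_add_one_or_of_adj (by omega) hm hz with rfl | rfl
    · exact hzw rfl
    · exact hzC (hprefix m (by omega))
  · obtain ⟨m, hm, rfl⟩ := List.getElem_of_mem hv
    exact D.pos_fst_lt hm (lt_of_not_ge fun hmn => hvC (hprefix m (by omega)))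

theorem eq_univ_of_isForcingClosed {C : Set V} (hC : IsForcingClosed G C)
    (hhead : ∀ i, (D.paths i).head (D.nonempty i) ∈ C) : C = univ := by
  classical
  by_contra hCne
  obtain ⟨v₀, hv₀⟩ := (ne_univ_iff_exists_notMem C).1 hCne
  obtain ⟨i₀, hi₀⟩ := D.cover v₀
  have : Nonempty V := ⟨v₀⟩
  set s := Finset.univ.filter fun i => ∃ v ∈ D.paths i, v ∉ C
  have hs : ∀ {i v}, v ∈ D.paths i → v ∉ C → i ∈ s := fun hv hvC =>
    Finset.mem_filter.2 ⟨Finset.mem_univ _, _, hv, hvC⟩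
  choose! u z f huC hu hz hzC hzf hf hright using
    fun i (hi : i ∈ s) => D.exists_frontier hC (hhead i) (Finset.mem_filter.1 hi).2
  have harc : ∀ i ∈ s, arc D.level f (fun i => (D.pos (u i)).1) (fun i => (D.pos (z i)).1) i =
      openSegment ℝ (D.pos (u i)) (D.pos (z i)) := fun i hi => by
    rw [arc, ← D.pos_snd (hu i hi), ← D.pos_snd (hzf i hi)]
  refine IsArcSystem.not_pairwiseDisjoint (p := fun i => (D.pos (u i)).1)
    (q := fun i => (D.pos (z i)).1) D.level_injective
    ⟨fun i hi => hs (hzf i hi) (hzC i hi), hf, fun i hi => hright _ (hs (hzf i hi) (hzC i hi))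
      _ (hzf i hi) (hzC i hi)⟩
    ⟨i₀, hs hi₀ hv₀⟩ fun i hi j hj hij => ?_
  simp only [Function.onFun, harc i hi, harc j hj]
  refine D.disjoint_openSegment (hz i hi) (hz j hj) (hu i hi) (hzf i hi) (hf i hi).symm
    (hu j hj) (hzf j hj) (hf j hj).symm fun heq => ?_
  have : u i ∈ ({u j, z j} : Set V) := heq ▸ mem_insert _ _
  rcases this with h | h
  · exact hij (D.eq_of_mem_of_mem (hu i hi) (h ▸ hu j hj))
  · exact hzC j hj (h ▸ huC i hi)

end ParallelPathsDrawing

theorem totalForcingNumber_le_two_mul_of_hasParallelDrawing {V : Type*} [Fintype V]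
    {G : SimpleGraph V} {k : ℕ} (hD : HasParallelDrawing G k) (hG : ∀ v, ∃ u, G.Adj u v) :
    totalForcingNumber G ≤ 2 * k := by
  classical
  obtain ⟨D⟩ := hD
  set heads := Finset.univ.image fun i => (D.paths i).head (D.nonempty i)
  have hforcing : IsForcingSet G ↑heads := isForcingSet_of_forall_isForcingClosed
    fun C hC hclosed => D.eq_univ_of_isForcingClosed hclosed fun i => hC (by simp [heads])
  calc totalForcingNumber G ≤ 2 * heads.card := totalForcingNumber_le_two_mul_card hG hforcing
    _ ≤ 2 * k := by grw [Finset.card_image_le, Finset.card_univ, Fintype.card_fin]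

section DisjointPaths

variable {k : ℕ} {n : Fin k → ℕ}

lemma disjointPaths_adj {a b : Σ i, Fin (n i)} :
    (disjointPaths k n).Adj a b ↔
      a.1 = b.1 ∧ ((a.2 : ℕ) + 1 = b.2 ∨ (b.2 : ℕ) + 1 = a.2) := by
  rw [disjointPaths, fromRel_adj]
  constructor
  · rintro ⟨-, ⟨h₁, h₂⟩ | ⟨h₁, h₂⟩⟩
    exacts [⟨h₁, Or.inl h₂⟩, ⟨h₁.symm, Or.inr h₂⟩]
  · rintro ⟨h₁, h₂ | h₂⟩
    · exact ⟨by rintro rfl; omega, Or.inl ⟨h₁, h₂⟩⟩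
    · exact ⟨by rintro rfl; omega, Or.inr ⟨h₁.symm, h₂⟩⟩

lemma fst_eq_of_disjointPaths_adj {a b : Σ i, Fin (n i)} (h : (disjointPaths k n).Adj a b) :
    a.1 = b.1 :=
  (disjointPaths_adj.1 h).1

lemma disjointPaths_exists_adj (hn : ∀ i, 2 ≤ n i) (v : Σ i, Fin (n i)) :
    ∃ u, (disjointPaths k n).Adj u v := by
  obtain ⟨i, j, hj⟩ := v
  rcases j with _ | j
  · exact ⟨⟨i, 1, hn i⟩, disjointPaths_adj.2 ⟨rfl, Or.inr rfl⟩⟩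
  · exact ⟨⟨i, j, by omega⟩, disjointPaths_adj.2 ⟨rfl, Or.inl rfl⟩⟩

lemma isForcingSet_disjointPaths (hn : ∀ i, 0 < n i) :
    IsForcingSet (disjointPaths k n)
      ↑(Finset.univ.image fun i => (⟨i, 0, hn i⟩ : Σ i, Fin (n i))) := by
  refine isForcingSet_of_forall_isForcingClosed fun C hC hclosed => eq_univ_of_forall ?_
  rintro ⟨i, j, hj⟩
  induction j using Nat.strong_induction_on with
  | _ j ih =>
  rcases j with _ | j
  · exact hC (by simp)
  · refine hclosed _ (ih j j.lt_succ_self (by omega)) _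
      (disjointPaths_adj.2 ⟨rfl, Or.inl rfl⟩) ?_
    rintro ⟨i', x, hx⟩ hadj hne
    obtain ⟨rfl, h⟩ := disjointPaths_adj.1 hadj
    dsimp only at h
    rcases h with h | h
    · exact absurd (by simp [← h]) hne
    · exact ih x (by omega) hx

lemma two_mul_le_card_of_isTotalForcingSet (hn : ∀ i, 0 < n i) {F : Finset (Σ i, Fin (n i))}
    (hF : IsTotalForcingSet (disjointPaths k n) F) : 2 * k ≤ F.card := by
  classical
  have hrange := hF.1.image_eq_range fun _ _ => fst_eq_of_disjointPaths_adj
  calc 2 * k = ∑ _i : Fin k, 2 := by simp [mul_comm]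
    _ ≤ ∑ i, (F.filter (·.1 = i)).card := Finset.sum_le_sum fun i _ => ?_
    _ = F.card := (Finset.card_eq_sum_card_fiberwise fun _ _ => Finset.mem_univ _).symm
  obtain ⟨u, hu, rfl⟩ : ∃ u ∈ F, u.1 = i := by
    have : i ∈ Sigma.fst '' (F : Set (Σ i, Fin (n i))) := hrange ▸ ⟨⟨i, 0, hn i⟩, rfl⟩
    simpa using this
  obtain ⟨w, hw, hwu⟩ := hF.2 u hu
  exact Finset.one_lt_card.2 ⟨u, by simpa using hu, w,
    by simpa [fst_eq_of_disjointPaths_adj hwu] using hw, hwu.ne.symm⟩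

theorem totalForcingNumber_disjointPaths (hn : ∀ i, 2 ≤ n i) :
    totalForcingNumber (disjointPaths k n) = 2 * k := by
  have hn₀ : ∀ i, 0 < n i := fun i => (hn i).trans_lt' two_pos
  have hG := disjointPaths_exists_adj hn
  refine le_antisymm ?_ (le_totalForcingNumber hG fun F => two_mul_le_card_of_isTotalForcingSet hn₀)
  calc totalForcingNumber (disjointPaths k n)
      ≤ 2 * (Finset.univ.image fun i => (⟨i, 0, hn₀ i⟩ : Σ i, Fin (n i))).card :=
        totalForcingNumber_le_two_mul_card hG (isForcingSet_disjointPaths hn₀)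
    _ ≤ 2 * k := by grw [Finset.card_image_le, Finset.card_univ, Fintype.card_fin]

end DisjointPaths

/-- For a graph of `k`-parallel paths without isolated vertices,
`F_t(G) ≤ 2k`; this bound is sharp, attained by disjoint unions of `k` paths
of order at least two. -/
theorem totalForcing_le_two_k :
    (∀ (V : Type) [Fintype V] (G : SimpleGraph V) (k : ℕ),
      IsGraphOfParallelPaths G k → (∀ v, ∃ u, G.Adj u v) →
        totalForcingNumber G ≤ 2 * k) ∧
    (∀ (k : ℕ) (n : Fin k → ℕ), (∀ i, 2 ≤ n i) →
      totalForcingNumber (disjointPaths k n) = 2 * k) :=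
  ⟨fun _ _ _ _ hG => totalForcingNumber_le_two_mul_of_hasParallelDrawing hG.1,
    fun _ _ => totalForcingNumber_disjointPaths⟩
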